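/- If f: R → S is an elementary embedding of rings (or merely of (R,R)-bimodules), then the assignment φ ↦ f*φ induces, for each n, an embedding of the lattice pp^n_R of (equivalence classes of) pp formulas for right R-modules in n free variables into the lattice pp^n_S. In particular, for pp formulas ψ, φ for right R-modules, ψ ≤ φ holds for R-modules if and only if f*ψ ≤ f*φ holds for S-modules. -/

import Mathlib

/-!
Core framework for formalizing statements from
"Tensor and direct extension of definable subcategories" (M. Prest).

Conventions:
* A *right* `R`-module is a type with `[AddCommGroup M] [Module Rᵐᵒᵖ M]`;
  the right action of `r : R` on `a : M` is `MulOpposite.op r • a`.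
* A *left* `R`-module is a type with `[AddCommGroup L] [Module R L]`.
* An `(R,S)`-bimodule is a type with a left `R`-action and a right `S`-action
  which commute: `[Module R B] [Module Sᵐᵒᵖ B] [SMulCommClass R Sᵐᵒᵖ B]`.
-/

open MulOpposite

universe u v

namespace MTM

/-- A pp formula for (right) `R`-modules, with free variables indexed by `ι`,
bound variables indexed by `κ` and equations indexed by `ε`:
`∃ ȳ (x̄ A + ȳ B = 0)`. -/
structure PP (R : Type u) [Ring R] (ι : Type) : Type (max u 1) where
  κ : Type
  ε : Type
  [fintκ : Fintype κ]
  [fintε : Fintype ε]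
  A : Matrix ι ε R
  B : Matrix κ ε R

attribute [instance] PP.fintκ PP.fintε

namespace PP

variable {R : Type u} [Ring R] {S : Type u} [Ring S] {ι : Type} [Fintype ι]

/-- The solution set of a pp formula in a right `R`-module. -/
def sol (φ : PP R ι) (M : Type v) [AddCommGroup M] [Module Rᵐᵒᵖ M] : Set (ι → M) :=
  { a | ∃ b : φ.κ → M, ∀ j : φ.ε,
      (∑ i, op (φ.A i j) • a i) + (∑ k, op (φ.B k j) • b k) = 0 }

/-- The solution set of a pp formula in a left `R`-module (the formula is then read
with coefficients acting on the left). -/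
def solL (φ : PP R ι) (L : Type v) [AddCommGroup L] [Module R L] : Set (ι → L) :=
  { a | ∃ b : φ.κ → L, ∀ j : φ.ε,
      (∑ i, φ.A i j • a i) + (∑ k, φ.B k j • b k) = 0 }

/-- `φ ≤ ψ` : every solution of `φ` is a solution of `ψ`, in every right `R`-module. -/
def Le (φ ψ : PP R ι) : Prop :=
  ∀ (M : Type u) [AddCommGroup M] [Module Rᵐᵒᵖ M], φ.sol M ⊆ ψ.sol M

/-- The elementary dual `Dφ = ∃ z̄ (x̄ = A z̄ ∧ B z̄ = 0)` of a pp formula for right modules;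
it is a pp formula for left `R`-modules (to be interpreted via `solL`). -/
noncomputable def dual (φ : PP R ι) : PP R ι where
  κ := φ.ε
  ε := ι ⊕ φ.κ
  A := fun i e =>
    letI := Classical.decEq ι
    Sum.elim (fun i' => if i = i' then (1 : R) else 0) (fun _ => (0 : R)) e
  B := fun z e => Sum.elim (fun i' => -(φ.A i' z)) (fun k => φ.B k z) e

/-- Transport of a pp formula along a ring homomorphism (`f⁎φ`). -/
def map (f : R →+* S) (φ : PP R ι) : PP S ι :=
  { κ := φ.κ, ε := φ.ε, A := fun i j => f (φ.A i j), B := fun k j => f (φ.B k j) }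

end PP

variable (R : Type u) [Ring R] (S : Type u) [Ring S]

/-- A pp-pair `φ/ψ` for right `R`-modules: pp formulas (in `n` free variables)
with `ψ(M) ≤ φ(M)` for every right `R`-module `M`. -/
structure PPPair : Type (u + 1) where
  n : ℕ
  num : PP R (Fin n)
  den : PP R (Fin n)
  le : ∀ (M : Type u) [AddCommGroup M] [Module Rᵐᵒᵖ M], den.sol M ⊆ num.sol M

/-- A pp-pair for left `R`-modules. -/
structure PPPairL : Type (u + 1) where
  n : ℕ
  num : PP R (Fin n)
  den : PP R (Fin n)
  le : ∀ (L : Type u) [AddCommGroup L] [Module R L], den.solL L ⊆ num.solL L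

variable {R}

/-- A pp-pair is closed on a right module `M` if the two solution sets agree. -/
def PPPair.ClosedOn (p : PPPair R) (M : Type v) [AddCommGroup M] [Module Rᵐᵒᵖ M] : Prop :=
  p.num.sol M = p.den.sol M

/-- A pp-pair is closed on a left module `L` if the two solution sets agree. -/
def PPPairL.ClosedOn (p : PPPairL R) (L : Type v) [AddCommGroup L] [Module R L] : Prop :=
  p.num.solL L = p.den.solL L

variable (R)

/-- The subcategory (class of modules, as a set of objects of `Mod-R`) defined by
closure of a set of pp-pairs. -/
def definedBy (Φ : Set (PPPair R)) : Set (ModuleCat.{u} Rᵐᵒᵖ) :=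
  { M | ∀ p ∈ Φ, p.ClosedOn M }

/-- The subcategory of left modules defined by closure of a set of pp-pairs. -/
def definedByL (Φ : Set (PPPairL R)) : Set (ModuleCat.{u} R) :=
  { L | ∀ p ∈ Φ, p.ClosedOn L }

/-- A class of right `R`-modules is a definable subcategory if it is the class of
modules on which each pp-pair in some set of pp-pairs is closed. -/
def IsDefinable (D : Set (ModuleCat.{u} Rᵐᵒᵖ)) : Prop :=
  ∃ Φ : Set (PPPair R), D = definedBy R Φ

/-- Definability for classes of left `R`-modules. -/
def IsDefinableL (D : Set (ModuleCat.{u} R)) : Prop :=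
  ∃ Φ : Set (PPPairL R), D = definedByL R Φ

/-- `⟨X⟩`: the smallest definable subcategory of `Mod-R` containing `X`. -/
def gen (X : Set (ModuleCat.{u} Rᵐᵒᵖ)) : Set (ModuleCat.{u} Rᵐᵒᵖ) :=
  ⋂₀ { D | IsDefinable R D ∧ X ⊆ D }

/-- `⟨X⟩` for classes of left modules. -/
def genL (X : Set (ModuleCat.{u} R)) : Set (ModuleCat.{u} R) :=
  ⋂₀ { D | IsDefinableL R D ∧ X ⊆ D }

/-- `φ ≤_𝒳 ψ` for a class `𝒳` of right `R`-modules. -/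
def LeOn (𝒳 : Set (ModuleCat.{u} Rᵐᵒᵖ)) {ι : Type} [Fintype ι] (φ ψ : PP R ι) : Prop :=
  ∀ M ∈ 𝒳, φ.sol M ⊆ ψ.sol M

/-- A pure embedding of right `R`-modules: an injective linear map which reflects
solution sets of pp formulas. -/
def IsPureEmb {M N : Type*} [AddCommGroup M] [Module Rᵐᵒᵖ M]
    [AddCommGroup N] [Module Rᵐᵒᵖ N] (f : M →ₗ[Rᵐᵒᵖ] N) : Prop :=
  Function.Injective f ∧
    ∀ (ι : Type) (_ : Fintype ι) (φ : PP R ι) (a : ι → M),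
      (fun i => f (a i)) ∈ φ.sol N → a ∈ φ.sol M

/-- A pure-injective module: every pure embedding out of it splits. -/
def IsPureInj (N : Type u) [AddCommGroup N] [Module Rᵐᵒᵖ N] : Prop :=
  ∀ (M : Type u) [AddCommGroup M] [Module Rᵐᵒᵖ M] (g : N →ₗ[Rᵐᵒᵖ] M),
    IsPureEmb R g → ∃ h : M →ₗ[Rᵐᵒᵖ] N, h.comp g = LinearMap.id

/-- `N` is an elementary cogenerator for the definable subcategory `D`:
a pure-injective member of `D` such that every member of `D` purely embeds in a
direct power of `N`. -/
def IsElemCogen (D : Set (ModuleCat.{u} Rᵐᵒᵖ)) (N : ModuleCat.{u} Rᵐᵒᵖ) : Prop :=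
  N ∈ D ∧ IsPureInj R N ∧
    ∀ M ∈ D, ∃ (I : Type u) (g : M →ₗ[Rᵐᵒᵖ] (I → N)), IsPureEmb R g

/-- A pure-injective hull of `X`: a minimal pure embedding into a pure-injective. -/
def IsPureInjHull {X H : Type u} [AddCommGroup X] [Module Rᵐᵒᵖ X]
    [AddCommGroup H] [Module Rᵐᵒᵖ H] (h : X →ₗ[Rᵐᵒᵖ] H) : Prop :=
  IsPureEmb R h ∧ IsPureInj R H ∧
    ∀ (Y : Type u) [AddCommGroup Y] [Module Rᵐᵒᵖ Y] (g : H →ₗ[Rᵐᵒᵖ] Y),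
      IsPureEmb R (g.comp h) → IsPureEmb R g

section RingHom

variable (f : R →+* S)

/-- Restriction of scalars of a (bundled) right `S`-module along `f : R →+* S`. -/
noncomputable def resMod (M : ModuleCat.{u} Sᵐᵒᵖ) : ModuleCat.{u} Rᵐᵒᵖ :=
  (ModuleCat.restrictScalars (RingHom.op f)).obj M

/-- The (definable) restriction `C|_R` of a definable subcategory `C` of `Mod-S`
along `f : R → S` : the subcategory of `Mod-R` defined by all pp-pairs `φ/ψ` for
`R`-modules such that `f⁎φ/f⁎ψ` is closed on `C`. -/
def restrictSubcat (C : Set (ModuleCat.{u} Sᵐᵒᵖ)) : Set (ModuleCat.{u} Rᵐᵒᵖ) :=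
  definedBy R { p : PPPair R | ∀ M ∈ C, (p.num.map f).sol M = (p.den.map f).sol M }

/-- The definable trace of `Mod-S` in `Mod-R` along `f`. -/
def DefTr : Set (ModuleCat.{u} Rᵐᵒᵖ) := restrictSubcat R S f Set.univ

/-- The direct extension `D^S` of a definable subcategory `D` of `Mod-R`:
those `S`-modules whose restriction along `f` lies in `D`. -/
def directExt (D : Set (ModuleCat.{u} Rᵐᵒᵖ)) : Set (ModuleCat.{u} Sᵐᵒᵖ) :=
  { M | resMod R S f M ∈ D }

end RingHom

end MTM
-- Tensor product over a (possibly noncommutative) ring.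
namespace MTM

open MulOpposite TensorProduct

universe x
variable (R : Type u) [Ring R] (S : Type u) [Ring S]

section Tensor

variable (M : Type u) [AddCommGroup M] [Module Rᵐᵒᵖ M]
variable (B : Type u) [AddCommGroup B] [Module R B]

/-- The subgroup of `M ⊗_ℤ B` of balancing relations. -/
def tensorRel : Submodule ℤ (TensorProduct ℤ M B) :=
  Submodule.span ℤ
    { x | ∃ (r : R) (m : M) (b : B), x = (op r • m) ⊗ₜ[ℤ] b - m ⊗ₜ[ℤ] (r • b) }

/-- The tensor product `M ⊗_R B` of a right `R`-module and a left `R`-module,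
as the quotient of `M ⊗_ℤ B` by the balancing relations. -/
abbrev RTensor : Type u := TensorProduct ℤ M B ⧸ tensorRel R M B

/-- `m ⊗ b` in `M ⊗_R B`. -/
noncomputable def rtmul (m : M) (b : B) : RTensor R M B := Submodule.Quotient.mk (m ⊗ₜ[ℤ] b)

variable {M B}
variable {M' : Type u} [AddCommGroup M'] [Module Rᵐᵒᵖ M']
variable {B' : Type u} [AddCommGroup B'] [Module R B']

theorem rel_le_B (g : B →ₗ[R] B') :
    tensorRel R M B ≤
      (tensorRel R M B').comap (LinearMap.lTensor M g.toAddMonoidHom.toIntLinearMap) := by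
  refine Submodule.span_le.mpr ?_
  rintro x ⟨r, m, b, rfl⟩
  change LinearMap.lTensor M g.toAddMonoidHom.toIntLinearMap _ ∈ tensorRel R M B'
  refine Submodule.subset_span ⟨r, m, g b, ?_⟩
  simp only [map_sub, LinearMap.lTensor_tmul,
    AddMonoidHom.coe_toIntLinearMap, LinearMap.toAddMonoidHom_coe]
  rw [g.map_smul]

theorem rel_le_M (h : M →ₗ[Rᵐᵒᵖ] M') :
    tensorRel R M B ≤
      (tensorRel R M' B).comap (LinearMap.rTensor B h.toAddMonoidHom.toIntLinearMap) := by
  refine Submodule.span_le.mpr ?_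
  rintro x ⟨r, m, b, rfl⟩
  change LinearMap.rTensor B h.toAddMonoidHom.toIntLinearMap _ ∈ tensorRel R M' B
  refine Submodule.subset_span ⟨r, h m, b, ?_⟩
  simp only [map_sub, LinearMap.rTensor_tmul,
    AddMonoidHom.coe_toIntLinearMap, LinearMap.toAddMonoidHom_coe]
  rw [h.map_smul]

/-- Functoriality of `M ⊗_R -` in left `R`-module maps (as a `ℤ`-linear map). -/
noncomputable def mapB (g : B →ₗ[R] B') : RTensor R M B →ₗ[ℤ] RTensor R M B' :=
  Submodule.mapQ _ _ _ (rel_le_B R g)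

/-- Functoriality of `- ⊗_R B` in right `R`-module maps (as a `ℤ`-linear map). -/
noncomputable def mapM (h : M →ₗ[Rᵐᵒᵖ] M') : RTensor R M B →ₗ[ℤ] RTensor R M' B :=
  Submodule.mapQ _ _ _ (rel_le_M R h)

@[simp] theorem mapB_mk (g : B →ₗ[R] B') (y : TensorProduct ℤ M B) :
    mapB R g (Submodule.Quotient.mk y) =
      Submodule.Quotient.mk (LinearMap.lTensor M g.toAddMonoidHom.toIntLinearMap y) :=
  rfl

@[simp] theorem mapM_mk (h : M →ₗ[Rᵐᵒᵖ] M') (y : TensorProduct ℤ M B) :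
    mapM R h (Submodule.Quotient.mk y) =
      Submodule.Quotient.mk (LinearMap.rTensor B h.toAddMonoidHom.toIntLinearMap y) :=
  rfl

section SAction

variable [Module Sᵐᵒᵖ B] [SMulCommClass R Sᵐᵒᵖ B]

/-- The right action of `s : S` on an `(R,S)`-bimodule, as a left `R`-linear map. -/
def sEndo (s : Sᵐᵒᵖ) : B →ₗ[R] B where
  toFun b := s • b
  map_add' x y := smul_add s x y
  map_smul' r b := (smul_comm r s b).symm

variable (M B)

/-- The right `S`-action on `M ⊗_R B` as a ring homomorphism `Sᵐᵒᵖ → End_ℤ (M ⊗_R B)`. -/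
noncomputable def rho : Sᵐᵒᵖ →+* Module.End ℤ (RTensor R M B) where
  toFun s := mapB R (sEndo R S (B := B) s)
  map_one' := by
    refine Submodule.linearMap_qext _ (TensorProduct.ext' fun m b => ?_)
    show (Submodule.Quotient.mk (m ⊗ₜ[ℤ] ((1 : Sᵐᵒᵖ) • b)) : RTensor R M B) =
      Submodule.Quotient.mk (m ⊗ₜ[ℤ] b)
    rw [one_smul]
  map_mul' s s' := by
    refine Submodule.linearMap_qext _ (TensorProduct.ext' fun m b => ?_)
    show (Submodule.Quotient.mk (m ⊗ₜ[ℤ] ((s * s') • b)) : RTensor R M B) =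
      Submodule.Quotient.mk (m ⊗ₜ[ℤ] (s • s' • b))
    rw [mul_smul]
  map_zero' := by
    refine Submodule.linearMap_qext _ (TensorProduct.ext' fun m b => ?_)
    show (Submodule.Quotient.mk (m ⊗ₜ[ℤ] ((0 : Sᵐᵒᵖ) • b)) : RTensor R M B) = 0
    rw [zero_smul, TensorProduct.tmul_zero, Submodule.Quotient.mk_zero]
  map_add' s s' := by
    refine Submodule.linearMap_qext _ (TensorProduct.ext' fun m b => ?_)
    show (Submodule.Quotient.mk (m ⊗ₜ[ℤ] ((s + s') • b)) : RTensor R M B) =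
      Submodule.Quotient.mk (m ⊗ₜ[ℤ] (s • b)) + Submodule.Quotient.mk (m ⊗ₜ[ℤ] (s' • b))
    rw [add_smul, TensorProduct.tmul_add, Submodule.Quotient.mk_add]

/-- The right `S`-module structure on `M ⊗_R B` for an `(R,S)`-bimodule `B`. -/
noncomputable instance instModS : Module Sᵐᵒᵖ (RTensor R M B) :=
  Module.compHom _ (rho R S M B)

theorem smul_mk (s : Sᵐᵒᵖ) (y : TensorProduct ℤ M B) :
    s • (Submodule.Quotient.mk y : RTensor R M B) =
      Submodule.Quotient.mk
        (LinearMap.lTensor M ((sEndo R S (B := B) s).toAddMonoidHom.toIntLinearMap) y) :=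
  rfl

@[simp] theorem smul_rtmul (s : Sᵐᵒᵖ) (m : M) (b : B) :
    s • rtmul R M B m b = rtmul R M B m (s • b) :=
  rfl

end SAction

end Tensor

end MTM
namespace MTM

open MulOpposite TensorProduct

variable (R : Type u) [Ring R] (S : Type u) [Ring S]

section TensorMaps

variable (M : Type u) [AddCommGroup M] [Module Rᵐᵒᵖ M]
variable {M' : Type u} [AddCommGroup M'] [Module Rᵐᵒᵖ M']
variable (B : Type u) [AddCommGroup B] [Module R B] [Module Sᵐᵒᵖ B] [SMulCommClass R Sᵐᵒᵖ B]
variable {B' : Type u} [AddCommGroup B'] [Module R B'] [Module Sᵐᵒᵖ B'] [SMulCommClass R Sᵐᵒᵖ B']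

/-- Functoriality of `M ⊗_R -` in maps of `(R,S)`-bimodules, as a map of right
`S`-modules. -/
noncomputable def mapBS (g : B →ₗ[R] B') (hg : ∀ (s : Sᵐᵒᵖ) (b : B), g (s • b) = s • g b) :
    RTensor R M B →ₗ[Sᵐᵒᵖ] RTensor R M B' where
  toFun := mapB R g
  map_add' := map_add _
  map_smul' s x := by
    obtain ⟨y, rfl⟩ := Submodule.Quotient.mk_surjective _ x
    show mapB R g (s • Submodule.Quotient.mk y) = s • mapB R g (Submodule.Quotient.mk y)
    rw [smul_mk R S, mapB_mk, mapB_mk, smul_mk R S,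
      ← LinearMap.comp_apply, ← LinearMap.comp_apply, ← LinearMap.lTensor_comp,
      ← LinearMap.lTensor_comp]
    have hcomp : g.toAddMonoidHom.toIntLinearMap ∘ₗ
          (sEndo R S (B := B) s).toAddMonoidHom.toIntLinearMap =
        (sEndo R S (B := B') s).toAddMonoidHom.toIntLinearMap ∘ₗ
          g.toAddMonoidHom.toIntLinearMap := by
      ext b
      exact hg s b
    rw [hcomp]

/-- Functoriality of `- ⊗_R B` in maps of right `R`-modules, as a map of right
`S`-modules. -/
noncomputable def mapMS (h : M →ₗ[Rᵐᵒᵖ] M') :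
    RTensor R M B →ₗ[Sᵐᵒᵖ] RTensor R M' B where
  toFun := mapM R h
  map_add' := map_add _
  map_smul' s x := by
    obtain ⟨y, rfl⟩ := Submodule.Quotient.mk_surjective _ x
    show mapM R h (s • Submodule.Quotient.mk y) = s • mapM R h (Submodule.Quotient.mk y)
    rw [smul_mk R S, mapM_mk, mapM_mk, smul_mk R S,
      ← LinearMap.comp_apply, ← LinearMap.comp_apply, LinearMap.rTensor_comp_lTensor,
      LinearMap.lTensor_comp_rTensor]

end TensorMaps

section Canonical

variable (M : Type u) [AddCommGroup M] [Module Rᵐᵒᵖ M]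

/-- The canonical map `M ⊗_R (∏ᵢ Lᵢ) → ∏ᵢ (M ⊗_R Lᵢ)` for a family of left
`R`-modules, as a `ℤ`-linear map. -/
noncomputable def canonicalL {ι' : Type u} (L : ι' → Type u)
    [∀ i, AddCommGroup (L i)] [∀ i, Module R (L i)] :
    RTensor R M (∀ i, L i) →ₗ[ℤ] ∀ i, RTensor R M (L i) :=
  LinearMap.pi fun i => mapB R (LinearMap.proj i)

/-- The canonical map `M ⊗_R (∏ᵢ Lᵢ) → ∏ᵢ (M ⊗_R Lᵢ)` for a family of
`(R,S)`-bimodules, as a map of right `S`-modules. -/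
noncomputable def canonicalB {ι' : Type u} (L : ι' → Type u)
    [∀ i, AddCommGroup (L i)] [∀ i, Module R (L i)] [∀ i, Module Sᵐᵒᵖ (L i)]
    [∀ i, SMulCommClass R Sᵐᵒᵖ (L i)] :
    RTensor R M (∀ i, L i) →ₗ[Sᵐᵒᵖ] ∀ i, RTensor R M (L i) :=
  LinearMap.pi fun i => mapBS R S M (∀ j, L j) (LinearMap.proj i) (fun _ _ => rfl)

/-- The canonical map `(∏_λ M_λ) ⊗_R B → ∏_λ (M_λ ⊗_R B)` for a family of right
`R`-modules and an `(R,S)`-bimodule `B`, as a map of right `S`-modules. -/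
noncomputable def canonicalM {ι' : Type u} (N : ι' → Type u)
    [∀ i, AddCommGroup (N i)] [∀ i, Module Rᵐᵒᵖ (N i)]
    (B : Type u) [AddCommGroup B] [Module R B] [Module Sᵐᵒᵖ B] [SMulCommClass R Sᵐᵒᵖ B] :
    RTensor R (∀ i, N i) B →ₗ[Sᵐᵒᵖ] ∀ i, RTensor R (N i) B :=
  LinearMap.pi fun i => mapMS R S (∀ j, N j) B (LinearMap.proj i)

end Canonical

section UnitMap

variable (M : Type u) [AddCommGroup M] [Module Rᵐᵒᵖ M]
variable (B : Type u) [AddCommGroup B] [Module R B] [Module Rᵐᵒᵖ B] [SMulCommClass R Rᵐᵒᵖ B]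

/-- For an `(R,R)`-bimodule `B` and a central-ish element `e` (e.g. `1 ∈ S` for a ring
extension `R → S`), the canonical map `M → M ⊗_R B`, `a ↦ a ⊗ e`, as a map of right
`R`-modules. -/
noncomputable def unitMap (e : B) (he : ∀ r : R, r • e = op r • e) :
    M →ₗ[Rᵐᵒᵖ] RTensor R M B where
  toFun m := rtmul R M B m e
  map_add' m m' := by
    show Submodule.Quotient.mk _ = Submodule.Quotient.mk _ + Submodule.Quotient.mk _
    rw [← Submodule.Quotient.mk_add, TensorProduct.add_tmul]
  map_smul' r m := by
    show rtmul R M B (r • m) e = r • rtmul R M B m e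
    rw [smul_rtmul]
    rw [rtmul, rtmul, Submodule.Quotient.eq]
    have : (r • e : B) = (r.unop : R) • e := (he r.unop).symm
    rw [this]
    exact Submodule.subset_span ⟨r.unop, m, e, by rw [op_unop]⟩

end UnitMap

end MTM
namespace MTM

open MulOpposite

variable (R : Type u) [Ring R] (S : Type u) [Ring S]

/-! ### pp formulas for `(R,S)`-bimodules -/

/-- The action of a formal coefficient `∑ (r,s)` of the bimodule language on an
element of an `(R,S)`-bimodule: `b ↦ ∑ r b s`. -/
def cAct (c : List (R × S)) {B : Type v} [AddCommGroup B] [Module R B] [Module Sᵐᵒᵖ B]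
    (b : B) : B :=
  (c.map fun p => p.1 • (op p.2 • b)).sum

/-- A pp formula for `(R,S)`-bimodules (equivalently, for right `Rᵒᵖ ⊗ S`-modules):
coefficients are formal sums of pairs `(r,s)`, acting by `x ↦ ∑ r x s`. -/
structure BiPP (ι : Type) : Type (max u 1) where
  κ : Type
  ε : Type
  [fintκ : Fintype κ]
  [fintε : Fintype ε]
  A : Matrix ι ε (List (R × S))
  B : Matrix κ ε (List (R × S))

attribute [instance] BiPP.fintκ BiPP.fintε

variable {R S} in
/-- Solution set of a bimodule pp formula in an `(R,S)`-bimodule. -/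
def BiPP.sol {ι : Type} [Fintype ι] (θ : BiPP R S ι) (Bm : Type v) [AddCommGroup Bm]
    [Module R Bm] [Module Sᵐᵒᵖ Bm] : Set (ι → Bm) :=
  { a | ∃ b : θ.κ → Bm, ∀ j : θ.ε,
      (∑ i, cAct R S (θ.A i j) (a i)) + (∑ k, cAct R S (θ.B k j) (b k)) = 0 }

/-- A bundled `(R,S)`-bimodule. -/
structure Bimod : Type (u + 1) where
  carrier : Type u
  [addCommGroup : AddCommGroup carrier]
  [modR : Module R carrier]
  [modSop : Module Sᵐᵒᵖ carrier]
  [smulComm : SMulCommClass R Sᵐᵒᵖ carrier]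

attribute [instance] Bimod.addCommGroup Bimod.modR Bimod.modSop Bimod.smulComm

instance : CoeSort (Bimod R S) (Type u) := ⟨Bimod.carrier⟩

/-- Bundling an `(R,S)`-bimodule. -/
def Bimod.of (B : Type u) [AddCommGroup B] [Module R B] [Module Sᵐᵒᵖ B]
    [SMulCommClass R Sᵐᵒᵖ B] : Bimod R S :=
  ⟨B⟩

/-- A pp-pair for `(R,S)`-bimodules. -/
structure BiPPPair : Type (max u 1) where
  n : ℕ
  num : BiPP R S (Fin n)
  den : BiPP R S (Fin n)
  le : ∀ Bm : Bimod R S, den.sol Bm ⊆ num.sol Bm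

variable {R S} in
/-- Closedness of a bimodule pp-pair on a bimodule. -/
def BiPPPair.ClosedOn (p : BiPPPair R S) (Bm : Type v) [AddCommGroup Bm] [Module R Bm]
    [Module Sᵐᵒᵖ Bm] : Prop :=
  p.num.sol Bm = p.den.sol Bm

/-- The class of bimodules defined by closure of a set of bimodule pp-pairs. -/
def biDefinedBy (Φ : Set (BiPPPair R S)) : Set (Bimod R S) :=
  { Bm | ∀ p ∈ Φ, p.ClosedOn Bm }

/-- Definable subcategories of the category `R-Mod-S` of `(R,S)`-bimodules. -/
def IsDefinableBi (𝓑 : Set (Bimod R S)) : Prop :=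
  ∃ Φ : Set (BiPPPair R S), 𝓑 = biDefinedBy R S Φ

/-- The smallest definable subcategory of `R-Mod-S` containing `X`. -/
def genBi (X : Set (Bimod R S)) : Set (Bimod R S) :=
  ⋂₀ { 𝓑 | IsDefinableBi R S 𝓑 ∧ X ⊆ 𝓑 }

/-- `θ ≤_𝓑 θ'` for a class `𝓑` of bimodules. -/
def BiLeOn (𝓑 : Set (Bimod R S)) {ι : Type} [Fintype ι] (θ θ' : BiPP R S ι) : Prop :=
  ∀ Bm ∈ 𝓑, θ.sol Bm ⊆ θ'.sol Bm

/-! ### Partitioned tuples, `(σ:φ)` and atomicity with respect to a bimodule -/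

/-- The index type of a `ν`-partitioned tuple: `k` blocks, the `t`-th of size `ν t`. -/
abbrev PIdx {k : ℕ} (ν : Fin k → ℕ) : Type := (t : Fin k) × Fin (ν t)

/-- The tensor product of matching partitioned tuples: the `k`-tuple
`(ā₁ ⊗ b̄₁, …, ā_k ⊗ b̄_k)` where `ā_t ⊗ b̄_t = ∑_j a_{tj} ⊗ b_{tj}`. -/
noncomputable def ptensor (M : Type u) [AddCommGroup M] [Module Rᵐᵒᵖ M] (B : Type u)
    [AddCommGroup B] [Module R B] {k : ℕ} {ν : Fin k → ℕ}
    (a : PIdx ν → M) (b : PIdx ν → B) : Fin k → RTensor R M B :=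
  fun t => ∑ j : Fin (ν t), rtmul R M B (a ⟨t, j⟩) (b ⟨t, j⟩)

variable {R}

/-- The pp-type of `ā` in `M` is generated by `φ`: `pp^M(ā) = {ψ : φ ≤ ψ}`. -/
def GeneratedBy {ι : Type} [Fintype ι] {M : Type u} [AddCommGroup M] [Module Rᵐᵒᵖ M]
    (a : ι → M) (φ : PP R ι) : Prop :=
  ∀ ψ : PP R ι, a ∈ ψ.sol M ↔ φ.Le ψ

/-- The pp-type of `ā` in `M` is `𝒳`-generated by `φ`: `pp^M(ā) = {ψ : φ ≤_𝒳 ψ}`. -/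
def GeneratedByOn (𝒳 : Set (ModuleCat.{u} Rᵐᵒᵖ)) {ι : Type} [Fintype ι] {M : Type u}
    [AddCommGroup M] [Module Rᵐᵒᵖ M] (a : ι → M) (φ : PP R ι) : Prop :=
  ∀ ψ : PP R ι, a ∈ ψ.sol M ↔ LeOn R 𝒳 φ ψ

variable (R)

/-- An assignment `(σ, φ) ↦ (σ:φ)` of a bimodule pp formula to each pp formula `σ`
for right `S`-modules (in `k` free variables) and each matching partitioned pp
formula `φ` for right `R`-modules. -/
def ColonAsgn : Type (max u 1) :=
  ∀ (k : ℕ) (ν : Fin k → ℕ), PP S (Fin k) → PP R (PIdx ν) → BiPP R S (PIdx ν)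

/-- The characterizing property of the assignment `(σ, φ) ↦ (σ:φ)`:
(1) if `ā ∈ φ(M)` and `b̄ ∈ (σ:φ)(B)` then `ā ⊗ b̄ ∈ σ(M ⊗_R B)`;
(2) if `pp^M(ā)` is generated by `φ` then `ā ⊗ b̄ ∈ σ(M ⊗_R B)` iff `b̄ ∈ (σ:φ)(B)`. -/
def ColonSpec (c : ColonAsgn R S) : Prop :=
  ∀ (k : ℕ) (ν : Fin k → ℕ) (σ : PP S (Fin k)) (φ : PP R (PIdx ν))
    (M : Type u) [AddCommGroup M] [Module Rᵐᵒᵖ M]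
    (Bm : Type u) [AddCommGroup Bm] [Module R Bm] [Module Sᵐᵒᵖ Bm]
    [SMulCommClass R Sᵐᵒᵖ Bm] (a : PIdx ν → M) (b : PIdx ν → Bm),
    (a ∈ φ.sol M → b ∈ (c k ν σ φ).sol Bm →
      ptensor R M Bm a b ∈ σ.sol (RTensor R M Bm)) ∧
    (GeneratedBy a φ →
      (ptensor R M Bm a b ∈ σ.sol (RTensor R M Bm) ↔ b ∈ (c k ν σ φ).sol Bm))

/-- `M` is atomic with respect to the `(R,S)`-bimodule `B` (relative to a choice `c`
of the assignment `(σ,φ) ↦ (σ:φ)`): for every partitioned finite tuple `ā` from `M`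
and every pp formula `σ` for right `S`-modules there is `φ ∈ pp^M(ā)` such that
`(σ:φ)(B)` is the largest among the `(σ:ψ)(B)` with `ψ ∈ pp^M(ā)`. -/
def AtomicWrt (c : ColonAsgn R S) (M : Type u) [AddCommGroup M] [Module Rᵐᵒᵖ M]
    (Bm : Type u) [AddCommGroup Bm] [Module R Bm] [Module Sᵐᵒᵖ Bm] : Prop :=
  ∀ (k : ℕ) (ν : Fin k → ℕ) (σ : PP S (Fin k)) (a : PIdx ν → M),
    ∃ φ : PP R (PIdx ν), a ∈ φ.sol M ∧
      ∀ ψ : PP R (PIdx ν), a ∈ ψ.sol M → (c k ν σ ψ).sol Bm ⊆ (c k ν σ φ).sol Bm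

/-! ### Mittag-Leffler modules, atomic modules -/

/-- `M` is Mittag-Leffler: the canonical map `M ⊗_R ∏ᵢ Lᵢ → ∏ᵢ (M ⊗_R Lᵢ)` is
injective for every family of left `R`-modules. -/
def IsML (M : Type u) [AddCommGroup M] [Module Rᵐᵒᵖ M] : Prop :=
  ∀ (ι' : Type u) (L : ι' → Type u) (_ : ∀ i, AddCommGroup (L i))
    (_ : ∀ i, Module R (L i)), Function.Injective (canonicalL R M L)

/-- `M` is `𝒳`-Mittag-Leffler for a class `𝒳` of left `R`-modules. -/
def IsMLOn (𝒳 : Set (ModuleCat.{u} R)) (M : Type u) [AddCommGroup M] [Module Rᵐᵒᵖ M] :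
    Prop :=
  ∀ (ι' : Type u) (L : ι' → Type u) (_ : ∀ i, AddCommGroup (L i))
    (_ : ∀ i, Module R (L i)),
    (∀ i, ModuleCat.of R (L i) ∈ 𝒳) → Function.Injective (canonicalL R M L)

/-- `M` is `D`-atomic: the pp-type of every finite tuple from `M` is `D`-finitely
generated. -/
def AtomicOn (D : Set (ModuleCat.{u} Rᵐᵒᵖ)) (M : Type u) [AddCommGroup M]
    [Module Rᵐᵒᵖ M] : Prop :=
  ∀ (n : ℕ) (a : Fin n → M), ∃ φ : PP R (Fin n), GeneratedByOn D a φ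

/-- The elementary dual `⟨K⟩ᵈ ⊆ Mod-R` of the definable subcategory of `R-Mod`
generated by a class `K` of left `R`-modules: it is defined by the pp-pairs for right
`R`-modules whose (elementary) dual pp-pair is closed on `⟨K⟩`. -/
def dualCat (K : Set (ModuleCat.{u} R)) : Set (ModuleCat.{u} Rᵐᵒᵖ) :=
  definedBy R { p : PPPair R |
    ∀ L ∈ genL R K, (p.num.dual).solL L = (p.den.dual).solL L }

/-! ### Pure projectivity, finite genericity, pure cogenerators -/

/-- A left `R`-module is pure-projective if it is a direct summand of a direct sum of
finitely presented left `R`-modules. -/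
def IsPureProjL (B : Type u) [AddCommGroup B] [Module R B] : Prop :=
  ∃ (ι : Type u) (_ : DecidableEq ι) (F : ι → Type u) (_ : ∀ i, AddCommGroup (F i))
    (_ : ∀ i, Module R (F i)) (_ : ∀ i, Module.FinitePresentation R (F i))
    (e : B →ₗ[R] DirectSum ι F) (p : DirectSum ι F →ₗ[R] B), p.comp e = LinearMap.id

/-- `M` is finitely generic in the definable subcategory `D`: for every pp formula
`φ` there is a tuple from `M` whose pp-type is `D`-generated by `φ`. -/
def FinGeneric (D : Set (ModuleCat.{u} Rᵐᵒᵖ)) (M : Type u) [AddCommGroup M]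
    [Module Rᵐᵒᵖ M] : Prop :=
  ModuleCat.of Rᵐᵒᵖ M ∈ D ∧
    ∀ (ι : Type) (_ : Fintype ι) (φ : PP R ι), ∃ a : ι → M, GeneratedByOn D a φ

variable {R S}

/-- The pp-type of a tuple in a bimodule is `𝓑`-generated by `θ`. -/
def BiGeneratedByOn (𝓑 : Set (Bimod R S)) {ι : Type} [Fintype ι] {Bm : Type u}
    [AddCommGroup Bm] [Module R Bm] [Module Sᵐᵒᵖ Bm] (b : ι → Bm) (θ : BiPP R S ι) :
    Prop :=
  ∀ θ' : BiPP R S ι, b ∈ θ'.sol Bm ↔ BiLeOn R S 𝓑 θ θ'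

variable (R S)

/-- A bimodule is finitely generic in a definable subcategory `𝓑` of `R-Mod-S`. -/
def FinGenericBi (𝓑 : Set (Bimod R S)) (Bm : Type u) [AddCommGroup Bm] [Module R Bm]
    [Module Sᵐᵒᵖ Bm] [SMulCommClass R Sᵐᵒᵖ Bm] : Prop :=
  Bimod.of R S Bm ∈ 𝓑 ∧
    ∀ (ι : Type) (_ : Fintype ι) (θ : BiPP R S ι), ∃ b : ι → Bm, BiGeneratedByOn 𝓑 b θ

end MTM
namespace MTM

open MulOpposite

variable (R : Type u) [Ring R] (S : Type u) [Ring S]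

/-! ### Tensor extension of definable subcategories -/

section TensorExt

variable (B : Type u) [AddCommGroup B] [Module R B] [Module Sᵐᵒᵖ B] [SMulCommClass R Sᵐᵒᵖ B]

/-- The set `{M ⊗_R B : M ∈ D}` of right `S`-modules. -/
noncomputable def tensorExtSet (D : Set (ModuleCat.{u} Rᵐᵒᵖ)) : Set (ModuleCat.{u} Sᵐᵒᵖ) :=
  { N | ∃ M ∈ D, N = ModuleCat.of Sᵐᵒᵖ (RTensor R M B) }

/-- The tensor extension `D ⊗_R B`: the definable subcategory of `Mod-S` generated by
`{M ⊗_R B : M ∈ D}`. -/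
noncomputable def tensorExt (D : Set (ModuleCat.{u} Rᵐᵒᵖ)) : Set (ModuleCat.{u} Sᵐᵒᵖ) :=
  gen S (tensorExtSet R S B D)

end TensorExt

/-- `D ⊗ 𝓑` for a definable subcategory `D` of `Mod-R` and a definable subcategory
`𝓑` of `R-Mod-S`: the definable subcategory of `Mod-S` generated by the modules
`M ⊗_R B` with `M ∈ D`, `B ∈ 𝓑`. -/
noncomputable def tensorProd (D : Set (ModuleCat.{u} Rᵐᵒᵖ)) (𝓑 : Set (Bimod R S)) :
    Set (ModuleCat.{u} Sᵐᵒᵖ) :=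
  gen S { N | ∃ M ∈ D, ∃ Bm ∈ 𝓑, N = ModuleCat.of Sᵐᵒᵖ (RTensor R M Bm) }

/-! ### Directed colimits -/

open CategoryTheory CategoryTheory.Limits in
/-- `M` is a directed colimit of modules satisfying `P`. -/
def IsDirectedColimitOf (M : ModuleCat.{u} Rᵐᵒᵖ) (P : ModuleCat.{u} Rᵐᵒᵖ → Prop) :
    Prop :=
  ∃ (J : Type u) (_ : Preorder J) (_ : IsDirected J (· ≤ ·)) (_ : Nonempty J)
    (F : J ⥤ ModuleCat.{u} Rᵐᵒᵖ) (c : Cocone F),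
    Nonempty (IsColimit c) ∧ Nonempty (c.pt ≅ M) ∧ ∀ j, P (F.obj j)

/-! ### Elementary embeddings of rings -/

open FirstOrder in
/-- `f : R →+* S` is an elementary embedding of rings: there is a model-theoretic
elementary embedding (for the first-order language of rings) whose underlying
function is `f`.  (Elementary embeddings preserve and reflect all first-order
formulas at all tuples of parameters from `R`.) -/
def IsElemRingEmb (f : R →+* S) : Prop :=
  letI := FirstOrder.Ring.compatibleRingOfRing R
  letI := FirstOrder.Ring.compatibleRingOfRing S
  ∃ F : Language.ring.ElementaryEmbedding R S, ∀ r : R, F r = f r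

/-! ### Bimodule structures along a ring homomorphism -/

section AlongHom

variable (f : R →+* S)

/-- The left `R`-module structure on `S` along `f`. -/
def modLeft : Module R S := Module.compHom S f

/-- The right `R`-module structure on `S` along `f`. -/
def modRight : Module Rᵐᵒᵖ S := Module.compHom S (RingHom.op f)

/-- `S` is an `(R,S)`-bimodule along `f`. -/
theorem smulComm_RS :
    letI := modLeft R S f
    SMulCommClass R Sᵐᵒᵖ S := by
  letI := modLeft R S f
  constructor
  intro r s x
  show f r * (x * s.unop) = (f r * x) * s.unop
  rw [mul_assoc]

/-- `S` is an `(R,R)`-bimodule along `f`. -/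
theorem smulComm_RR :
    letI := modLeft R S f
    letI := modRight R S f
    SMulCommClass R Rᵐᵒᵖ S := by
  letI := modLeft R S f
  letI := modRight R S f
  constructor
  intro r r' x
  show f r * (x * f r'.unop) = (f r * x) * f r'.unop
  rw [mul_assoc]

end AlongHom

end MTM
namespace MTM

open MulOpposite

variable (R : Type u) [Ring R] (S : Type u) [Ring S]

/-- A pure embedding of `(R,S)`-bimodules: an injective map of bimodules which
reflects solution sets of bimodule pp formulas. -/
def IsBiPureEmb {B B' : Type u} [AddCommGroup B] [Module R B] [Module Sᵐᵒᵖ B]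
    [AddCommGroup B'] [Module R B'] [Module Sᵐᵒᵖ B']
    (g : B →ₗ[R] B') (_ : ∀ (s : Sᵐᵒᵖ) (b : B), g (s • b) = s • g b) : Prop :=
  Function.Injective g ∧
    ∀ (ι : Type) (_ : Fintype ι) (θ : BiPP R S ι) (a : ι → B),
      (fun i => g (a i)) ∈ θ.sol B' → a ∈ θ.sol B

/-- The ring `S`, viewed as an `(R,S)`-bimodule (and as an `(R,R)`-bimodule) along a
ring homomorphism `f : R →+* S`. -/
def SAlong (f : R →+* S) : Type u := S

namespace SAlong

variable (f : R →+* S)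

instance : AddCommGroup (SAlong R S f) := inferInstanceAs (AddCommGroup S)
instance : Module R (SAlong R S f) := Module.compHom S f
instance : Module Sᵐᵒᵖ (SAlong R S f) := inferInstanceAs (Module Sᵐᵒᵖ S)
instance : Module Rᵐᵒᵖ (SAlong R S f) := Module.compHom S (RingHom.op f)

instance : SMulCommClass R Sᵐᵒᵖ (SAlong R S f) := smulComm_RS R S f

instance : SMulCommClass R Rᵐᵒᵖ (SAlong R S f) := smulComm_RR R S f

/-- The element `1 ∈ S`. -/
def one : SAlong R S f := (1 : S)

theorem smul_one : ∀ r : R, r • (one R S f) = op r • (one R S f) := by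
  intro r
  show f r * (1 : S) = (1 : S) * f r
  rw [mul_one, one_mul]

end SAlong

end MTM

/-!
Prest's matrix criterion: `ψ ≤ φ` holds iff there are matrices `V`, `W` over `R` with
`(A_φ; 0) + V B_φ = (A_ψ; B_ψ) W`. Sufficiency is a direct computation with the witnesses
`ȳ' = (x̄, ȳ) V`; necessity follows by evaluating `φ` at the generic solution of `ψ`, namely
the images of the standard basis vectors in the module presented by the columns of
`(A_ψ; B_ψ)`. The criterion asserts the solvability of a linear system whose coefficients are
the entries of the four matrices, which is an existential first-order statement with
parameters; an elementary embedding therefore preserves and reflects it.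
-/

namespace MTM

open MulOpposite Matrix

section VecMulRight

variable {R : Type*} [Ring R] {M N : Type*} [AddCommGroup M] [Module Rᵐᵒᵖ M]
  [AddCommGroup N] [Module Rᵐᵒᵖ N] {ι κ ε ρ : Type*} [Fintype ι] [Fintype κ]

/-- `Matrix.vecMul` for a row vector with entries in a right `R`-module. -/
def vecMulRight (c : ι → M) (G : Matrix ι ε R) : ε → M :=
  fun j => ∑ i, op (G i j) • c i

theorem vecMulRight_add (c : ι → M) (G H : Matrix ι ε R) :
    vecMulRight c (G + H) = vecMulRight c G + vecMulRight c H := by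
  funext j
  simp [vecMulRight, add_smul, Finset.sum_add_distrib]

theorem vecMulRight_zero (c : ι → M) : vecMulRight c (0 : Matrix ι ε R) = 0 := by
  funext j
  simp [vecMulRight]

theorem zero_vecMulRight (G : Matrix ι ε R) : vecMulRight (0 : ι → M) G = 0 := by
  funext j
  simp [vecMulRight]

theorem vecMulRight_mul [Fintype ε] (c : ι → M) (G : Matrix ι ε R) (H : Matrix ε ρ R) :
    vecMulRight c (G * H) = vecMulRight (vecMulRight c G) H := by
  funext j
  simp only [vecMulRight, mul_apply, Finset.op_sum, Finset.sum_smul, Finset.smul_sum, smul_smul,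
    ← op_mul]
  exact Finset.sum_comm

theorem sumElim_vecMulRight_fromRows (a : ι → M) (b : κ → M) (A : Matrix ι ε R)
    (B : Matrix κ ε R) :
    vecMulRight (Sum.elim a b) (fromRows A B) = vecMulRight a A + vecMulRight b B := by
  funext j
  simp [vecMulRight, Fintype.sum_sum_type]

theorem comp_vecMulRight (g : M →ₗ[Rᵐᵒᵖ] N) (c : ι → M) (G : Matrix ι ε R) :
    g ∘ vecMulRight c G = vecMulRight (g ∘ c) G := by
  funext j
  simp [vecMulRight]

theorem vecMulRight_pi_apply (x : ι → ρ → R) (H : Matrix ι ε R) (j : ε) (q : ρ) :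
    vecMulRight x H j q = ((of x)ᵀ * H) q j := by
  simp [vecMulRight, mul_apply, Finset.sum_apply]

end VecMulRight

namespace PP

variable {R : Type u} [Ring R] {ι : Type} [Fintype ι]

theorem mem_sol_iff (φ : PP R ι) {M : Type v} [AddCommGroup M] [Module Rᵐᵒᵖ M]
    (a : ι → M) :
    a ∈ φ.sol M ↔ ∃ b : φ.κ → M, vecMulRight a φ.A + vecMulRight b φ.B = 0 :=
  exists_congr fun _ => funext_iff.symm

/-- `V` writes witnesses for `φ` as linear combinations of a solution `(x̄, ȳ)` of `ψ`, and `W`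
writes the equations of `φ` so obtained as combinations of the equations of `ψ`. -/
def HasLeCertificate (ψ φ : PP R ι) : Prop :=
  ∃ (V : Matrix (ι ⊕ ψ.κ) φ.κ R) (W : Matrix ψ.ε φ.ε R),
    fromRows φ.A 0 + V * φ.B = fromRows ψ.A ψ.B * W

theorem le_of_hasLeCertificate {ψ φ : PP R ι} (h : ψ.HasLeCertificate φ) : ψ.Le φ := by
  obtain ⟨V, W, hVW⟩ := h
  intro M _ _ a ha
  obtain ⟨b, hb⟩ := (mem_sol_iff ψ a).1 ha
  refine (mem_sol_iff φ a).2 ⟨vecMulRight (Sum.elim a b) V, ?_⟩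
  calc vecMulRight a φ.A + vecMulRight (vecMulRight (Sum.elim a b) V) φ.B
      = vecMulRight (Sum.elim a b) (fromRows φ.A 0 + V * φ.B) := by
        rw [vecMulRight_add, vecMulRight_mul, sumElim_vecMulRight_fromRows, vecMulRight_zero,
          add_zero]
    _ = vecMulRight (vecMulRight (Sum.elim a b) (fromRows ψ.A ψ.B)) W := by
        rw [hVW, vecMulRight_mul]
    _ = 0 := by
        rw [sumElim_vecMulRight_fromRows, hb, zero_vecMulRight]

theorem hasLeCertificate_of_le {ψ φ : PP R ι} (h : ψ.Le φ) : ψ.HasLeCertificate φ := by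
  classical
  set G := fromRows ψ.A ψ.B
  let cols : ψ.ε → ι ⊕ ψ.κ → R := fun l q => G q l
  let N : Submodule Rᵐᵒᵖ (ι ⊕ ψ.κ → R) := Submodule.span Rᵐᵒᵖ (Set.range cols)
  let e : ι ⊕ ψ.κ → ι ⊕ ψ.κ → R := fun p => Pi.single p 1
  have he : (of e)ᵀ = 1 := by
    ext p q
    simp [e, Pi.single_apply, one_apply]
  have heG : vecMulRight e G = cols := by
    funext l q
    simp only [vecMulRight_pi_apply, he, Matrix.one_mul, cols]
  have hgeneric : N.mkQ ∘ e ∘ Sum.inl ∈ ψ.sol ((ι ⊕ ψ.κ → R) ⧸ N) := by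
    refine (mem_sol_iff ψ _).2 ⟨N.mkQ ∘ e ∘ Sum.inr, ?_⟩
    rw [← sumElim_vecMulRight_fromRows, ← Sum.comp_elim, Sum.elim_comp_inl_inr,
      ← comp_vecMulRight, heG]
    funext l
    simp only [Function.comp_apply, Pi.zero_apply, Submodule.mkQ_apply,
      Submodule.Quotient.mk_eq_zero]
    exact Submodule.subset_span (Set.mem_range_self l)
  obtain ⟨b, hb⟩ := (mem_sol_iff φ _).1 (h _ hgeneric)
  choose v hv using fun k => N.mkQ_surjective (b k)
  have hmem : ∀ j, vecMulRight (Sum.elim (e ∘ Sum.inl) v) (fromRows φ.A φ.B) j ∈ N := by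
    intro j
    rw [← Submodule.Quotient.mk_eq_zero, ← Submodule.mkQ_apply,
      ← Function.comp_apply (f := N.mkQ), comp_vecMulRight, Sum.comp_elim,
      show N.mkQ ∘ v = b from funext hv, sumElim_vecMulRight_fromRows, hb]
    rfl
  choose w hw using fun j => (Submodule.mem_span_range_iff_exists_fun Rᵐᵒᵖ).1 (hmem j)
  let W : Matrix ψ.ε φ.ε R := of fun l j => unop (w j l)
  have hW : vecMulRight cols W = vecMulRight (Sum.elim (e ∘ Sum.inl) v) (fromRows φ.A φ.B) :=
    funext fun j => by simpa [vecMulRight, W] using hw j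
  have hinl : (of (e ∘ Sum.inl))ᵀ = fromRows 1 0 := by
    ext (i | k) i' <;> simp [e, Pi.single_apply, one_apply]
  refine ⟨(of v)ᵀ, W, ?_⟩
  ext q j
  rw [sumElim_vecMulRight_fromRows] at hW
  have := congrFun (congrFun hW j) q
  simp only [Pi.add_apply, vecMulRight_pi_apply, hinl,
    fromRows_mul, Matrix.one_mul, Matrix.zero_mul] at this
  exact this.symm

theorem le_iff_hasLeCertificate (ψ φ : PP R ι) : ψ.Le φ ↔ ψ.HasLeCertificate φ :=
  ⟨hasLeCertificate_of_le, le_of_hasLeCertificate⟩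

end PP

section FirstOrder

open FirstOrder Language

noncomputable def ringTermSum {α β : Type*} (s : Finset β) (t : β → ring.Term α) :
    ring.Term α :=
  (s.toList.map t).sum

theorem realize_ringTermSum {T : Type*} [Ring T] [Ring.CompatibleRing T] {α β : Type*}
    (s : Finset β) (t : β → ring.Term α) (v : α → T) :
    (ringTermSum s t).realize v = ∑ i ∈ s, (t i).realize v := by
  rw [ringTermSum, ← Finset.sum_map_toList]
  generalize s.toList = l
  induction l with
  | nil => simp
  | cons a l ih => simp [ih]

variable (m n k l : Type*) [Fintype m] [Fintype n] [Fintype k] [Fintype l]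

noncomputable def solvabilityFormula : ring.Formula ((m × n) ⊕ (k × n) ⊕ (m × l)) :=
  Formula.iExs ((m × k) ⊕ (l × n)) <| Formula.iInf fun ij : m × n =>
    let P : m → n → ring.Term _ := fun i j => var (Sum.inl (Sum.inl (i, j)))
    let Q : k → n → ring.Term _ := fun i j => var (Sum.inl (Sum.inr (Sum.inl (i, j))))
    let C : m → l → ring.Term _ := fun i j => var (Sum.inl (Sum.inr (Sum.inr (i, j))))
    let V : m → k → ring.Term _ := fun i j => var (Sum.inr (Sum.inl (i, j)))
    let W : l → n → ring.Term _ := fun i j => var (Sum.inr (Sum.inr (i, j)))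
    Term.equal (P ij.1 ij.2 + ringTermSum Finset.univ fun p => V ij.1 p * Q p ij.2)
      (ringTermSum Finset.univ fun q => C ij.1 q * W q ij.2)

variable {m n k l}

def matrixParams {T : Type*} (P : Matrix m n T) (Q : Matrix k n T) (C : Matrix m l T) :
    (m × n) ⊕ (k × n) ⊕ (m × l) → T :=
  Sum.elim (fun p => P p.1 p.2) (Sum.elim (fun p => Q p.1 p.2) fun p => C p.1 p.2)

theorem realize_solvabilityFormula {T : Type*} [Ring T] [Ring.CompatibleRing T]
    (P : Matrix m n T) (Q : Matrix k n T) (C : Matrix m l T) :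
    (solvabilityFormula m n k l).Realize (matrixParams P Q C) ↔
      ∃ (V : Matrix m k T) (W : Matrix l n T), P + V * Q = C * W := by
  rw [solvabilityFormula, Formula.realize_iExs]
  simp only [Formula.realize_iInf, Formula.realize_equal, Ring.realize_add, Ring.realize_mul,
    realize_ringTermSum, Term.realize_var, matrixParams, Sum.elim_inl, Sum.elim_inr]
  constructor
  · rintro ⟨x, hx⟩
    refine ⟨of fun i p => x (Sum.inl (i, p)), of fun q j => x (Sum.inr (q, j)), ?_⟩
    ext i j
    simpa [mul_apply] using hx (i, j)
  · rintro ⟨V, W, hVW⟩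
    refine ⟨Sum.elim (fun p => V p.1 p.2) (fun p => W p.1 p.2), fun ij => ?_⟩
    simpa [mul_apply] using congrFun (congrFun hVW ij.1) ij.2

theorem IsElemRingEmb.exists_add_mul_eq_mul_map_iff {R S : Type u} [Ring R] [Ring S]
    {f : R →+* S} (hf : IsElemRingEmb R S f) (P : Matrix m n R) (Q : Matrix k n R)
    (C : Matrix m l R) :
    (∃ (V : Matrix m k S) (W : Matrix l n S), P.map f + V * Q.map f = C.map f * W) ↔
      ∃ (V : Matrix m k R) (W : Matrix l n R), P + V * Q = C * W := by
  let := Ring.compatibleRingOfRing R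
  let := Ring.compatibleRingOfRing S
  obtain ⟨F, hF⟩ := hf
  have hparams : F ∘ matrixParams P Q C = matrixParams (P.map f) (Q.map f) (C.map f) := by
    funext p
    rcases p with p | p | p <;> exact hF _
  rw [← realize_solvabilityFormula, ← realize_solvabilityFormula, ← hparams, F.map_formula]

end FirstOrder

theorem PP.hasLeCertificate_map_iff {R S : Type u} [Ring R] [Ring S] {f : R →+* S}
    (hf : IsElemRingEmb R S f) {ι : Type} [Fintype ι] (ψ φ : PP R ι) :
    (ψ.map f).HasLeCertificate (φ.map f) ↔ ψ.HasLeCertificate φ := by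
  have h := hf.exists_add_mul_eq_mul_map_iff (fromRows φ.A 0) φ.B (fromRows ψ.A ψ.B)
  rwa [fromRows_map, fromRows_map, Matrix.map_zero _ f.map_zero] at h

/-- If `f : R → S` is an elementary embedding of rings, then
`φ ↦ f⁎φ` induces, for each `n`, an embedding of the lattice `pp^n_R` into
`pp^n_S`; in particular `ψ ≤ φ` for right `R`-modules iff `f⁎ψ ≤ f⁎φ` for right
`S`-modules. -/
theorem statement16 (R S : Type u) [Ring R] [Ring S] (f : R →+* S)
    (hf : IsElemRingEmb R S f) :
    ∀ (n : ℕ) (ψ φ : PP R (Fin n)), ψ.Le φ ↔ (ψ.map f).Le (φ.map f) := by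
  intro n ψ φ
  rw [PP.le_iff_hasLeCertificate, PP.le_iff_hasLeCertificate, PP.hasLeCertificate_map_iff hf]

end MTM
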